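/- Let X be a finite nonempty set, F a finite class of functions X → {−1,1}, μ a probability distribution on F, and ρ a probability distribution on X. Then E_{f,g∼μ independent}[ ( E_{x∼ρ}[ f(x)·g(x) ] )² ] ≥ (32 · sq(F)²)^{−4}. Equivalently, for f, g ∼ μ and x, z ∼ ρ all independent, E[ f(x)·g(x)·f(z)·g(z) ] ≥ (32 · sq(F)²)^{−4}. -/

import Mathlib

open MeasureTheory Finset

attribute [local instance] Classical.propDecidable

/-- `ρ` is a probability distribution on the finite type `X`. -/
def IsDist {X : Type} [Fintype X] (ρ : X → ℝ) : Prop :=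
  (∀ x, 0 ≤ ρ x) ∧ ∑ x, ρ x = 1

/-- `μ` is a probability distribution supported on the finite class `F`. -/
def IsDistOn {X : Type} [Fintype X] (F : Finset (X → ℝ)) (μ : (X → ℝ) → ℝ) : Prop :=
  (∀ f, 0 ≤ μ f) ∧ (∀ f ∉ F, μ f = 0) ∧ ∑ f ∈ F, μ f = 1

/-- The statistical query dimension of a finite class `F` of `±1`-valued functions. -/
noncomputable def sqDim {X : Type} [Fintype X] (F : Finset (X → ℝ)) : ℕ :=
  sSup {d : ℕ | ∃ ρ : X → ℝ, IsDist ρ ∧ ∃ g : Fin d → (X → ℝ),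
    Function.Injective g ∧ (∀ i, g i ∈ F) ∧
    ∀ i j, i ≠ j → |∑ x, ρ x * (g i x * g j x)| ≤ 1 / (d : ℝ)}

/-!
Write `⟨f, g⟩ = E_ρ[f g]` (`corr ρ f g`). The quantity to bound is `⟨K, K⟩` for the kernel
`K = E_μ[f ⊗ f]` under `ρ ⊗ ρ`, and `⟨K, s ⊗ s⟩ = E_μ[⟨f, s⟩²]`, so by Cauchy–Schwarz it is at
least `E_μ[⟨f, s⟩²]²` for every `±1`-valued `s`. To find a good `s ∈ F`, take a maximal set
`S ⊆ F` of functions with pairwise correlations below `τ = 1/(sq(F) + 1)`: it has at most `sq(F)`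
elements, and by maximality every `f ∈ F` is `τ`-correlated with some member of `S`, so some
`s ∈ S` is `τ`-correlated with a set of `μ`-mass at least `1/sq(F)`. Then
`E_μ[⟨f, s⟩²] ≥ τ² / sq(F)`.
-/

section Correlation

variable {X Y : Type} [Fintype X] [Fintype Y]

def corr (ρ f g : X → ℝ) : ℝ := ∑ x, ρ x * (f x * g x)

lemma corr_comm (ρ f g : X → ℝ) : corr ρ f g = corr ρ g f := by
  simp only [corr, mul_comm (f _)]

lemma corr_self_eq_one {ρ f : X → ℝ} (hρ : ∑ x, ρ x = 1) (hf : ∀ x, f x = 1 ∨ f x = -1) :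
    corr ρ f f = 1 := by
  have hf2 (x : X) : f x * f x = 1 := by rcases hf x with h | h <;> simp [h]
  simp [corr, hf2, hρ]

lemma corr_sum_smul_left {ι : Type*} (s : Finset ι) (c : ι → ℝ) (f : ι → X → ℝ) (ρ g : X → ℝ) :
    corr ρ (∑ i ∈ s, c i • f i) g = ∑ i ∈ s, c i * corr ρ (f i) g := by
  simp only [corr, Finset.sum_apply, Pi.smul_apply, smul_eq_mul, sum_mul, mul_sum]
  rw [sum_comm]
  exact sum_congr rfl fun i _ => sum_congr rfl fun x _ => by ring

lemma corr_prod (ρ f g : X → ℝ) (σ f' g' : Y → ℝ) :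
    corr (fun p : X × Y => ρ p.1 * σ p.2) (fun p => f p.1 * f' p.2) (fun p => g p.1 * g' p.2) =
      corr ρ f g * corr σ f' g' := by
  simp only [corr, Fintype.sum_prod_type, sum_mul_sum]
  exact sum_congr rfl fun x _ => sum_congr rfl fun y _ => by ring

lemma corr_sq_le_mul {ρ : X → ℝ} (hρ : ∀ x, 0 ≤ ρ x) (f g : X → ℝ) :
    corr ρ f g ^ 2 ≤ corr ρ f f * corr ρ g g :=
  sum_sq_le_sum_mul_sum_of_sq_le_mul _ (fun x _ => mul_nonneg (hρ x) (mul_self_nonneg _))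
    (fun x _ => mul_nonneg (hρ x) (mul_self_nonneg _)) (fun x _ => le_of_eq (by ring))

theorem sum_mul_corr_sq_sq_le {ρ : X → ℝ} (hρ : ∀ x, 0 ≤ ρ x) (F : Finset (X → ℝ))
    (μ : (X → ℝ) → ℝ) (s : X → ℝ) :
    (∑ f ∈ F, μ f * corr ρ f s ^ 2) ^ 2 ≤
      corr ρ s s ^ 2 * ∑ f ∈ F, ∑ g ∈ F, μ f * μ g * corr ρ f g ^ 2 := by
  let P : X × X → ℝ := fun p => ρ p.1 * ρ p.2
  let T : (X → ℝ) → X × X → ℝ := fun f p => f p.1 * f p.2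
  let K : X × X → ℝ := ∑ f ∈ F, μ f • T f
  have hT (f g : X → ℝ) : corr P (T f) (T g) = corr ρ f g ^ 2 := by
    rw [corr_prod, sq]
  have hKs : corr P K (T s) = ∑ f ∈ F, μ f * corr ρ f s ^ 2 := by
    simp only [K, corr_sum_smul_left, hT]
  have hKK : corr P K K = ∑ f ∈ F, ∑ g ∈ F, μ f * μ g * corr ρ f g ^ 2 := by
    simp only [K, corr_sum_smul_left]
    refine sum_congr rfl fun f _ => ?_
    rw [corr_comm, corr_sum_smul_left, mul_sum]
    exact sum_congr rfl fun g _ => by rw [hT, corr_comm ρ g f]; ring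
  have hP (p : X × X) : 0 ≤ P p := mul_nonneg (hρ p.1) (hρ p.2)
  rw [← hKs, ← hKK, ← hT, mul_comm]
  exact corr_sq_le_mul hP K (T s)

end Correlation

section Domination

variable {α β : Type*}

lemma exists_independent_dominating_subset (F : Finset α) (R : α → α → Prop)
    (hrefl : ∀ a ∈ F, R a a) (hsymm : ∀ a b, R a b → R b a) :
    ∃ S ⊆ F, (S : Set α).Pairwise (fun a b => ¬R a b) ∧ ∀ a ∈ F, ∃ s ∈ S, R a s := by
  let T : Finset (Finset α) := F.powerset.filter fun S => (S : Set α).Pairwise fun a b => ¬R a b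
  obtain ⟨S, hST, hSmax⟩ := T.exists_max_image card ⟨∅, by simp [T]⟩
  obtain ⟨hSF, hSind⟩ : S ⊆ F ∧ (S : Set α).Pairwise fun a b => ¬R a b := by
    simpa [T] using hST
  refine ⟨S, hSF, hSind, fun a ha => ?_⟩
  by_cases haS : a ∈ S
  · exact ⟨a, haS, hrefl a ha⟩
  by_contra! hfree
  have hins : insert a S ∈ T := by
    simp only [T, mem_filter, mem_powerset, insert_subset_iff, coe_insert]
    exact ⟨⟨ha, hSF⟩, hSind.insert_of_notMem haS fun b hb =>
      ⟨hfree b hb, fun h => hfree b hb (hsymm b a h)⟩⟩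
  have := hSmax _ hins
  rw [card_insert_of_notMem haS] at this
  omega

lemma exists_le_sum_filter_of_dominating [Nonempty β] {F : Finset α} {S : Finset β}
    {μ : α → ℝ} (hμ : ∀ a ∈ F, 0 ≤ μ a) (hμ1 : ∑ a ∈ F, μ a = 1) {R : α → β → Prop}
    (hdom : ∀ a ∈ F, ∃ s ∈ S, R a s) :
    ∃ s ∈ S, 1 / (#S : ℝ) ≤ ∑ a ∈ F with R a s, μ a := by
  choose! g hgS hgR using hdom
  obtain ⟨a, ha⟩ := nonempty_of_sum_ne_zero (hμ1.trans_ne one_ne_zero)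
  have hS : S.Nonempty := ⟨g a, hgS a ha⟩
  obtain ⟨s, hs, hmass⟩ := exists_le_sum_fiber_of_maps_to_of_nsmul_le_sum hgS hS
    (b := 1 / (#S : ℝ))
    (by rw [nsmul_eq_mul, mul_one_div_cancel (by simpa using hS.ne_empty), hμ1])
  refine ⟨s, hs, hmass.trans
    (sum_le_sum_of_subset_of_nonneg ?_ fun a ha _ => hμ a (mem_filter.1 ha).1)⟩
  intro a
  simp only [mem_filter]
  rintro ⟨ha, rfl⟩
  exact ⟨ha, hgR a ha⟩

end Domination

lemma sq_mul_sum_filter_le_sum_mul_sq {α : Type*} {F : Finset α} {μ φ : α → ℝ}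
    (hμ : ∀ a ∈ F, 0 ≤ μ a) {τ : ℝ} (hτ : 0 ≤ τ) :
    τ ^ 2 * ∑ a ∈ F with τ ≤ |φ a|, μ a ≤ ∑ a ∈ F, μ a * φ a ^ 2 := by
  rw [mul_sum]
  calc ∑ a ∈ F with τ ≤ |φ a|, τ ^ 2 * μ a ≤ ∑ a ∈ F with τ ≤ |φ a|, μ a * φ a ^ 2 := by
        refine sum_le_sum fun a ha => ?_
        obtain ⟨haF, hτa⟩ := mem_filter.1 ha
        rw [mul_comm, ← sq_abs (φ a)]
        gcongr
        exact hμ a haF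
    _ ≤ ∑ a ∈ F, μ a * φ a ^ 2 :=
        sum_le_sum_of_subset_of_nonneg (filter_subset _ _) fun a ha _ =>
          mul_nonneg (hμ a ha) (sq_nonneg _)

section StatisticalQueryDimension

variable {X : Type} [Fintype X] {F S : Finset (X → ℝ)} {ρ : X → ℝ}

lemma card_le_sqDim (hρ : IsDist ρ) (hSF : S ⊆ F)
    (hS : (S : Set (X → ℝ)).Pairwise fun f g => |corr ρ f g| ≤ 1 / #S) : #S ≤ sqDim F := by
  have hbdd : BddAbove {d : ℕ | ∃ ρ : X → ℝ, IsDist ρ ∧ ∃ g : Fin d → (X → ℝ),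
      Function.Injective g ∧ (∀ i, g i ∈ F) ∧
      ∀ i j, i ≠ j → |∑ x, ρ x * (g i x * g j x)| ≤ 1 / (d : ℝ)} := by
    refine ⟨#F, ?_⟩
    rintro d ⟨-, -, g, hg, hgF, -⟩
    simpa using Fintype.card_le_of_injective (fun i => (⟨g i, hgF i⟩ : F))
      fun i j hij => hg (congrArg Subtype.val hij)
  let e := S.equivFin.symm
  refine le_csSup hbdd ⟨ρ, hρ, fun i => e i, Subtype.val_injective.comp e.injective,
    fun i => hSF (e i).2, fun i j hij => hS (e i).2 (e j).2 ?_⟩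
  exact fun h => hij (e.injective (Subtype.ext h))

lemma card_le_sqDim_of_pairwise_lt (hρ : IsDist ρ) (hSF : S ⊆ F)
    (hS : (S : Set (X → ℝ)).Pairwise fun f g => |corr ρ f g| < 1 / (sqDim F + 1)) :
    #S ≤ sqDim F := by
  by_contra! hlarge
  obtain ⟨T, hTS, hT⟩ := exists_subset_card_eq hlarge
  have := card_le_sqDim hρ (hTS.trans hSF) fun f hf g hg hfg => by
    rw [hT, Nat.cast_succ]
    exact (hS (hTS hf) (hTS hg) hfg).le
  omega

end StatisticalQueryDimension

lemma one_div_pow_le_sq (d : ℝ) (hd : 1 ≤ d) :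
    1 / (32 * d ^ 2) ^ 4 ≤ ((1 / (d + 1)) ^ 2 / d) ^ 2 := by
  have hd0 : 0 < d := by linarith
  rw [show ((1 / (d + 1)) ^ 2 / d) ^ 2 = 1 / ((d + 1) ^ 4 * d ^ 2) by field_simp]
  gcongr
  nlinarith [pow_le_pow_left₀ (by linarith : (0 : ℝ) ≤ d + 1) (by linarith : d + 1 ≤ 2 * d) 4,
    pow_le_pow_right₀ hd (by norm_num : 6 ≤ 8), pow_pos hd0 6]

theorem two_party_norm_lower_bound_general {X : Type} [Fintype X]
    (F : Finset (X → ℝ))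
    (hsign : ∀ f ∈ F, ∀ x, f x = 1 ∨ f x = -1)
    (μ : (X → ℝ) → ℝ) (hμ : IsDistOn F μ) (ρ : X → ℝ) (hρ : IsDist ρ) :
    1 / (32 * (sqDim F : ℝ) ^ 2) ^ 4 ≤
      ∑ f ∈ F, ∑ g ∈ F, μ f * μ g * (∑ x : X, ρ x * (f x * g x)) ^ 2 := by
  obtain ⟨hμ0, -, hμ1⟩ := hμ
  set d := sqDim F
  set τ : ℝ := 1 / (d + 1)
  have hτ1 : τ ≤ 1 := div_le_one_of_le₀ (by linarith [d.cast_nonneg (α := ℝ)]) (by positivity)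
  obtain ⟨S, hSF, hSind, hdom⟩ := exists_independent_dominating_subset F
    (fun f g => τ ≤ |corr ρ f g|)
    (fun f hf => by simpa [corr_self_eq_one hρ.2 (hsign f hf)] using hτ1)
    (fun f g => by simp only [corr_comm ρ f g, imp_self])
  have hSd : #S ≤ d := card_le_sqDim_of_pairwise_lt hρ hSF (hSind.mono' fun _ _ => not_le.1)
  obtain ⟨s, hsS, hmass⟩ := exists_le_sum_filter_of_dominating (fun f _ => hμ0 f) hμ1 hdom
  have hS : 0 < #S := card_pos.2 ⟨s, hsS⟩
  have hd : (1 : ℝ) ≤ d := by exact_mod_cast hS.trans_le hSd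
  have hcorr : τ ^ 2 / d ≤ ∑ f ∈ F, μ f * corr ρ f s ^ 2 := calc
    τ ^ 2 / d ≤ τ ^ 2 * (1 / #S) := by
      rw [div_eq_mul_one_div]; gcongr
    _ ≤ τ ^ 2 * ∑ f ∈ F with τ ≤ |corr ρ f s|, μ f := by gcongr
    _ ≤ _ := sq_mul_sum_filter_le_sum_mul_sq (fun f _ => hμ0 f) (by positivity)
  calc 1 / (32 * (d : ℝ) ^ 2) ^ 4 ≤ (τ ^ 2 / d) ^ 2 := one_div_pow_le_sq d hd
    _ ≤ (∑ f ∈ F, μ f * corr ρ f s ^ 2) ^ 2 := by gcongr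
    _ ≤ corr ρ s s ^ 2 * ∑ f ∈ F, ∑ g ∈ F, μ f * μ g * corr ρ f g ^ 2 :=
        sum_mul_corr_sq_sq_le hρ.1 F μ s
    _ = _ := by rw [corr_self_eq_one hρ.2 (hsign s (hSF hsS)), one_pow, one_mul]; rfl

/-- Lower bound on the 2-party norm of the evaluation function:
`E_{f,g∼μ}[(E_{x∼ρ}[f(x)g(x)])²] ≥ (32·sq(F)²)⁻⁴`. -/
theorem two_party_norm_lower_bound {X : Type} [Fintype X] [Nonempty X]
    (F : Finset (X → ℝ)) (hF : F.Nonempty)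
    (hsign : ∀ f ∈ F, ∀ x, f x = 1 ∨ f x = -1)
    (μ : (X → ℝ) → ℝ) (hμ : IsDistOn F μ) (ρ : X → ℝ) (hρ : IsDist ρ) :
    1 / (32 * (sqDim F : ℝ) ^ 2) ^ 4 ≤
      ∑ f ∈ F, ∑ g ∈ F, μ f * μ g * (∑ x : X, ρ x * (f x * g x)) ^ 2 :=
  two_party_norm_lower_bound_general F hsign μ hμ ρ hρ
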